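/- Let {ψ(θ,S), θ,S ∈ T_0} be a biadmissible family of nonnegative random variables and for each stopping time S ∈ T_0 let v(S) = ess sup_{τ_1,τ_2 ∈ T_S} E[ψ(τ_1,τ_2) | F_S]. Then the family {v(S), S ∈ T_0} is admissible (v(S) is nonnegative F_S-measurable and v(S) = v(S') a.s. on {S = S'}) and is a supermartingale system: for any S ∈ T_0 and θ, θ' ∈ T_S with θ ≥ θ' a.s., E[v(θ) | F_{θ'}] ≤ v(θ') a.s. -/

import Mathlib

open MeasureTheory Filter Set Topology

variable {Ω : Type*}

/-- `τ` belongs to `T_0`: it is a stopping time of `𝓕` with values in `[0, T]`. -/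
def MemT0 {m0 : MeasurableSpace Ω} (𝓕 : MeasureTheory.Filtration ℝ m0) (T : ℝ)
    (τ : Ω → ℝ) : Prop :=
  MeasureTheory.IsStoppingTime 𝓕 (fun ω => (τ ω : WithTop ℝ)) ∧ ∀ ω, τ ω ∈ Set.Icc (0 : ℝ) T

/-- `v` is an essential supremum of the family `f i`, `i` ranging over `{i | P i}`:
it dominates every member a.s. and is a.s. below any other a.s. upper bound. -/
def IsEssSupFam {m0 : MeasurableSpace Ω} (μ : MeasureTheory.Measure Ω) {ι : Sort*}
    (P : ι → Prop) (f : ι → Ω → ℝ) (v : Ω → ℝ) : Prop :=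
  (∀ i, P i → f i ≤ᵐ[μ] v) ∧ ∀ w : Ω → ℝ, (∀ i, P i → f i ≤ᵐ[μ] w) → v ≤ᵐ[μ] w

/-- `v` is an essential infimum of the family `f i`, `i` ranging over `{i | P i}`. -/
def IsEssInfFam {m0 : MeasurableSpace Ω} (μ : MeasureTheory.Measure Ω) {ι : Sort*}
    (P : ι → Prop) (f : ι → Ω → ℝ) (v : Ω → ℝ) : Prop :=
  (∀ i, P i → v ≤ᵐ[μ] f i) ∧ ∀ w : Ω → ℝ, (∀ i, P i → w ≤ᵐ[μ] f i) → w ≤ᵐ[μ] v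

/-- An admissible family of nonnegative random variables indexed by the stopping
times in `T_0`: `φ τ` is a nonnegative `F_τ`-measurable random variable, and
`φ τ = φ τ'` a.s. on `{τ = τ'}`. -/
def Admissible {m0 : MeasurableSpace Ω} (𝓕 : MeasureTheory.Filtration ℝ m0) (T : ℝ)
    (μ : MeasureTheory.Measure Ω) (φ : (Ω → ℝ) → Ω → ℝ) : Prop :=
  (∀ τ (hτ : MemT0 𝓕 T τ),
      Measurable[hτ.1.measurableSpace] (φ τ) ∧ ∀ ω, 0 ≤ φ τ ω) ∧
  ∀ τ τ', MemT0 𝓕 T τ → MemT0 𝓕 T τ' →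
    ∀ᵐ ω ∂μ, τ ω = τ' ω → φ τ ω = φ τ' ω

/-- An a.e. variant of admissibility (for families defined only up to a.s. equality,
such as value-function families): `φ τ` is a.s. nonnegative and a.s. equal to some
`F_τ`-measurable random variable, and `φ τ = φ τ'` a.s. on `{τ = τ'}`. -/
def AdmissibleAE {m0 : MeasurableSpace Ω} (𝓕 : MeasureTheory.Filtration ℝ m0) (T : ℝ)
    (μ : MeasureTheory.Measure Ω) (φ : (Ω → ℝ) → Ω → ℝ) : Prop :=
  (∀ τ (hτ : MemT0 𝓕 T τ),
      (∀ᵐ ω ∂μ, 0 ≤ φ τ ω) ∧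
      ∃ w : Ω → ℝ, Measurable[hτ.1.measurableSpace] w ∧ φ τ =ᵐ[μ] w) ∧
  ∀ τ τ', MemT0 𝓕 T τ → MemT0 𝓕 T τ' →
    ∀ᵐ ω ∂μ, τ ω = τ' ω → φ τ ω = φ τ' ω

/-- A biadmissible family: `ψ τ S` is a nonnegative `F_{τ ∨ S}`-measurable random
variable, and `ψ τ S = ψ τ' S'` a.s. on `{τ = τ'} ∩ {S = S'}`. -/
def Biadmissible {m0 : MeasurableSpace Ω} (𝓕 : MeasureTheory.Filtration ℝ m0) (T : ℝ)
    (μ : MeasureTheory.Measure Ω) (ψ : (Ω → ℝ) → (Ω → ℝ) → Ω → ℝ) : Prop :=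
  (∀ τ S (hτ : MemT0 𝓕 T τ) (hS : MemT0 𝓕 T S),
      Measurable[(hτ.1.max hS.1).measurableSpace] (ψ τ S) ∧ ∀ ω, 0 ≤ ψ τ S ω) ∧
  ∀ τ τ' S S', MemT0 𝓕 T τ → MemT0 𝓕 T τ' → MemT0 𝓕 T S → MemT0 𝓕 T S' →
    ∀ᵐ ω ∂μ, τ ω = τ' ω → S ω = S' ω → ψ τ S ω = ψ τ' S' ω

/-- `θn ↓ θ` a.s.: the sequence is a.s. nonincreasing and converges a.s. to `θ`. -/
def DownAS {m0 : MeasurableSpace Ω} (μ : MeasureTheory.Measure Ω)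
    (θn : ℕ → Ω → ℝ) (θ : Ω → ℝ) : Prop :=
  ∀ᵐ ω ∂μ, (∀ n, θn (n + 1) ω ≤ θn n ω) ∧
    Filter.Tendsto (fun n => θn n ω) Filter.atTop (nhds (θ ω))

/-- `θn ↑ θ` a.s.: the sequence is a.s. nondecreasing and converges a.s. to `θ`. -/
def UpAS {m0 : MeasurableSpace Ω} (μ : MeasureTheory.Measure Ω)
    (θn : ℕ → Ω → ℝ) (θ : Ω → ℝ) : Prop :=
  ∀ᵐ ω ∂μ, (∀ n, θn n ω ≤ θn (n + 1) ω) ∧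
    Filter.Tendsto (fun n => θn n ω) Filter.atTop (nhds (θ ω))

/-- The family `φ` is right continuous along stopping times in expectation. -/
def RCE {m0 : MeasurableSpace Ω} (𝓕 : MeasureTheory.Filtration ℝ m0) (T : ℝ)
    (μ : MeasureTheory.Measure Ω) (φ : (Ω → ℝ) → Ω → ℝ) : Prop :=
  ∀ θ, MemT0 𝓕 T θ → ∀ θn : ℕ → Ω → ℝ, (∀ n, MemT0 𝓕 T (θn n)) → DownAS μ θn θ →
    Filter.Tendsto (fun n => ∫ ω, φ (θn n) ω ∂μ) Filter.atTop (nhds (∫ ω, φ θ ω ∂μ))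

/-- The family `φ` is left continuous along stopping times in expectation. -/
def LCE {m0 : MeasurableSpace Ω} (𝓕 : MeasureTheory.Filtration ℝ m0) (T : ℝ)
    (μ : MeasureTheory.Measure Ω) (φ : (Ω → ℝ) → Ω → ℝ) : Prop :=
  ∀ θ, MemT0 𝓕 T θ → ∀ θn : ℕ → Ω → ℝ, (∀ n, MemT0 𝓕 T (θn n)) → UpAS μ θn θ →
    Filter.Tendsto (fun n => ∫ ω, φ (θn n) ω ∂μ) Filter.atTop (nhds (∫ ω, φ θ ω ∂μ))

/-- The biadmissible family `ψ` is uniformly right continuous in expectation along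
stopping times: for `S_n ↓ S` a.s. (all in `T_0`), the expectation of the essential
supremum over `θ ∈ T_0` of `|ψ(θ, S) - ψ(θ, S_n)|` (resp. `|ψ(S, θ) - ψ(S_n, θ)|`)
tends to `0`. -/
def URCE {m0 : MeasurableSpace Ω} (𝓕 : MeasureTheory.Filtration ℝ m0) (T : ℝ)
    (μ : MeasureTheory.Measure Ω) (ψ : (Ω → ℝ) → (Ω → ℝ) → Ω → ℝ) : Prop :=
  ∀ S, MemT0 𝓕 T S → ∀ Sn : ℕ → Ω → ℝ, (∀ n, MemT0 𝓕 T (Sn n)) → DownAS μ Sn S →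
    (∀ D : ℕ → Ω → ℝ,
      (∀ n, IsEssSupFam μ (MemT0 𝓕 T) (fun θ ω => |ψ θ S ω - ψ θ (Sn n) ω|) (D n)) →
      Filter.Tendsto (fun n => ∫ ω, D n ω ∂μ) Filter.atTop (nhds 0)) ∧
    ∀ D : ℕ → Ω → ℝ,
      (∀ n, IsEssSupFam μ (MemT0 𝓕 T) (fun θ ω => |ψ S θ ω - ψ (Sn n) θ ω|) (D n)) →
      Filter.Tendsto (fun n => ∫ ω, D n ω ∂μ) Filter.atTop (nhds 0)

/-- The biadmissible family `ψ` is uniformly left continuous in expectation along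
stopping times. -/
def ULCE {m0 : MeasurableSpace Ω} (𝓕 : MeasureTheory.Filtration ℝ m0) (T : ℝ)
    (μ : MeasureTheory.Measure Ω) (ψ : (Ω → ℝ) → (Ω → ℝ) → Ω → ℝ) : Prop :=
  ∀ S, MemT0 𝓕 T S → ∀ Sn : ℕ → Ω → ℝ, (∀ n, MemT0 𝓕 T (Sn n)) → UpAS μ Sn S →
    (∀ D : ℕ → Ω → ℝ,
      (∀ n, IsEssSupFam μ (MemT0 𝓕 T) (fun θ ω => |ψ θ S ω - ψ θ (Sn n) ω|) (D n)) →
      Filter.Tendsto (fun n => ∫ ω, D n ω ∂μ) Filter.atTop (nhds 0)) ∧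
    ∀ D : ℕ → Ω → ℝ,
      (∀ n, IsEssSupFam μ (MemT0 𝓕 T) (fun θ ω => |ψ S θ ω - ψ (Sn n) θ ω|) (D n)) →
      Filter.Tendsto (fun n => ∫ ω, D n ω ∂μ) Filter.atTop (nhds 0)

/-!
The conditional rewards `E[ψ(τ₁, τ₂) | F_S]`, `(τ₁, τ₂) ∈ T_S × T_S`, form an upward directed
family, so their essential supremum `v(S)` is the a.s. limit of an increasing sequence of them
(a countable subfamily is found by maximizing `∫ sup arctan`). This gives an `F_S`-measurable
version of `v(S)`, and conditional monotone convergence with the tower property gives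
`E[v(θ) | F_θ'] ≤ v(θ')`. On `{S = S'}` the σ-algebras `F_S` and `F_S'` agree and every pair after
`S` can be turned into a pair after `S'`, so `v(S) = v(S')` there. Since `T_S` is defined by a.s.
inequalities, the pasted stopping times used throughout are stopping times only because `F_0`
contains the null sets.
-/

section CountableSupremum

variable {m0 : MeasurableSpace Ω} {μ : Measure Ω} {ι : Type*} {P : ι → Prop}

theorem integrable_iSup_of_abs_le [IsFiniteMeasure μ] {h : ℕ → Ω → ℝ} {C : ℝ}
    (hm : ∀ n, AEMeasurable (h n) μ) (hC : ∀ n ω, |h n ω| ≤ C) :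
    Integrable (fun ω => ⨆ n, h n ω) μ := by
  refine Integrable.mono' (integrable_const C) (AEMeasurable.iSup hm).aestronglyMeasurable
    (Eventually.of_forall fun ω => ?_)
  have hbdd : BddAbove (range fun n => h n ω) :=
    ⟨C, by rintro _ ⟨n, rfl⟩; exact (abs_le.1 (hC n ω)).2⟩
  rw [Real.norm_eq_abs, abs_le]
  exact ⟨(abs_le.1 (hC 0 ω)).1.trans (le_ciSup hbdd 0), ciSup_le fun n => (abs_le.1 (hC n ω)).2⟩

theorem exists_seq_forall_ae_le_iSup [IsFiniteMeasure μ] {h : ι → Ω → ℝ} {C : ℝ}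
    (hP : ∃ i, P i) (hm : ∀ i, P i → AEMeasurable (h i) μ) (hC : ∀ i, P i → ∀ ω, |h i ω| ≤ C) :
    ∃ g : ℕ → ι, (∀ n, P (g n)) ∧ ∀ i, P i → ∀ᵐ ω ∂μ, h i ω ≤ ⨆ n, h (g n) ω := by
  set S : (ℕ → ι) → Ω → ℝ := fun g ω => ⨆ n, h (g n) ω
  set I : (ℕ → ι) → ℝ := fun g => ∫ ω, S g ω ∂μ
  set Adm : Set (ℕ → ι) := {g | ∀ n, P (g n)}
  have hbdd (g : ℕ → ι) (hg : g ∈ Adm) (ω : Ω) : BddAbove (range fun n => h (g n) ω) :=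
    ⟨C, by rintro _ ⟨n, rfl⟩; exact (abs_le.1 (hC _ (hg n) ω)).2⟩
  have hint (g : ℕ → ι) (hg : g ∈ Adm) : Integrable (S g) μ :=
    integrable_iSup_of_abs_le (fun n => hm _ (hg n)) (fun n => hC _ (hg n))
  have hmono (g g' : ℕ → ι) (hg' : g' ∈ Adm) (hsub : ∀ n, ∃ k, g n = g' k) (ω : Ω) :
      S g ω ≤ S g' ω := by
    refine ciSup_le fun n => ?_
    obtain ⟨k, hk⟩ := hsub n
    exact hk ▸ le_ciSup (hbdd g' hg' ω) k
  have hI_bdd : BddAbove (I '' Adm) := by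
    refine ⟨∫ _, C ∂μ, ?_⟩
    rintro _ ⟨g, hg, rfl⟩
    exact integral_mono (hint g hg) (integrable_const C)
      fun ω => ciSup_le fun n => (abs_le.1 (hC _ (hg n) ω)).2
  have hI_ne : (I '' Adm).Nonempty := by
    obtain ⟨i, hi⟩ := hP
    exact ⟨_, fun _ => i, fun _ => hi, rfl⟩
  set c := sSup (I '' Adm)
  have hex (k : ℕ) : ∃ g ∈ Adm, c - 1 / (k + 1) < I g := by
    obtain ⟨_, ⟨g, hg, rfl⟩, hlt⟩ :=
      exists_lt_of_lt_csSup hI_ne (sub_lt_self c Nat.one_div_pos_of_nat)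
    exact ⟨g, hg, hlt⟩
  choose G hG hG_lt using hex
  -- `g` enumerates all the near-maximizing sequences `G k` at once, so `I g` is the maximum `c`.
  set g : ℕ → ι := fun n => G n.unpair.1 n.unpair.2
  have hg : g ∈ Adm := fun n => hG _ _
  have hc_le : c ≤ I g := by
    refine le_of_forall_pos_lt_add fun ε hε => ?_
    obtain ⟨k, hk⟩ := exists_nat_one_div_lt hε
    have hGg : I (G k) ≤ I g := integral_mono (hint _ (hG k)) (hint g hg)
      (hmono _ _ hg fun n => ⟨Nat.pair k n, by simp [g]⟩)
    linarith [hG_lt k]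
  refine ⟨g, hg, fun i hi => ?_⟩
  -- Adjoining `i` to the maximizing sequence `g` cannot increase `I`, so `h i ≤ S g` a.e.
  set g' : ℕ → ι := fun n => if n = 0 then i else g (n - 1)
  have hg' : g' ∈ Adm := fun n => by by_cases hn : n = 0 <;> simp [g', hn, hi, hg (n - 1)]
  have hSS' : S g ≤ᵐ[μ] S g' :=
    Eventually.of_forall (hmono _ _ hg' fun n => ⟨n + 1, by simp [g']⟩)
  have hS_eq : S g =ᵐ[μ] S g' := (integral_eq_iff_of_ae_le (hint g hg) (hint g' hg') hSS').1
    (le_antisymm (integral_mono_ae (hint g hg) (hint g' hg') hSS')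
      ((le_csSup hI_bdd ⟨g', hg', rfl⟩).trans hc_le))
  filter_upwards [hS_eq] with ω hω
  rw [show (⨆ n, h (g n) ω) = S g ω from rfl, hω]
  exact le_ciSup (hbdd g' hg' ω) 0

open Real in
theorem IsEssSupFam.exists_seq_isLUB [IsFiniteMeasure μ] {f : ι → Ω → ℝ} {v : Ω → ℝ}
    (hv : IsEssSupFam μ P f v) (hP : ∃ i, P i) (hf : ∀ i, P i → AEMeasurable (f i) μ) :
    ∃ g : ℕ → ι, (∀ n, P (g n)) ∧ ∀ᵐ ω ∂μ, IsLUB (range fun n => f (g n) ω) (v ω) := by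
  -- Composing with `arctan` makes the family bounded without changing its order structure.
  obtain ⟨g, hg, hle⟩ := exists_seq_forall_ae_le_iSup (h := fun i ω => arctan (f i ω))
    (C := π / 2) hP (fun i hi => continuous_arctan.measurable.comp_aemeasurable (hf i hi))
    fun i _ ω => abs_le.2 ⟨(neg_pi_div_two_lt_arctan _).le, (arctan_lt_pi_div_two _).le⟩
  have hgv : ∀ᵐ ω ∂μ, ∀ n, f (g n) ω ≤ v ω := ae_all_iff.2 fun n => hv.1 _ (hg n)
  set w : Ω → ℝ := fun ω => ⨆ n, f (g n) ω
  have hvw : v ≤ᵐ[μ] w := hv.2 w fun i hi => by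
    filter_upwards [hle i hi, hgv] with ω hiω hgω
    have hbdd : BddAbove (range fun n => f (g n) ω) := ⟨v ω, by rintro _ ⟨n, rfl⟩; exact hgω n⟩
    refine arctan_strictMono.le_iff_le.1 (hiω.trans (ciSup_le fun n => ?_))
    exact arctan_strictMono.monotone (le_ciSup hbdd n)
  refine ⟨g, hg, ?_⟩
  filter_upwards [hgv, hvw] with ω hgω hvwω
  exact ⟨by rintro _ ⟨n, rfl⟩; exact hgω n, fun b hb => hvwω.trans (ciSup_le fun n => hb ⟨n, rfl⟩)⟩

theorem IsEssSupFam.exists_measurable_ae_eq [IsFiniteMeasure μ] {f : ι → Ω → ℝ} {v : Ω → ℝ}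
    {m : MeasurableSpace Ω} (hm : m ≤ m0) (hv : IsEssSupFam μ P f v) (hP : ∃ i, P i)
    (hf : ∀ i, P i → Measurable[m] (f i)) : ∃ w, Measurable[m] w ∧ v =ᵐ[μ] w := by
  obtain ⟨g, hg, hlub⟩ := hv.exists_seq_isLUB hP fun i hi => ((hf i hi).mono hm le_rfl).aemeasurable
  refine ⟨fun ω => ⨆ n, f (g n) ω, Measurable.iSup fun n => hf _ (hg n), ?_⟩
  filter_upwards [hlub] with ω hω
  exact hω.ciSup_eq.symm

theorem IsEssSupFam.exists_monotone_seq_tendsto [IsFiniteMeasure μ] {f : ι → Ω → ℝ}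
    {v : Ω → ℝ} (hv : IsEssSupFam μ P f v) (hP : ∃ i, P i) (hf : ∀ i, P i → AEMeasurable (f i) μ)
    (hdir : ∀ i j, P i → P j → ∃ k, P k ∧ f i ≤ᵐ[μ] f k ∧ f j ≤ᵐ[μ] f k) :
    ∃ g : ℕ → ι, (∀ n, P (g n)) ∧ ∀ᵐ ω ∂μ,
      Monotone (fun n => f (g n) ω) ∧ Tendsto (fun n => f (g n) ω) atTop (𝓝 (v ω)) := by
  obtain ⟨g, hg, hlub⟩ := hv.exists_seq_isLUB hP hf
  choose k hk hik hjk using hdir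
  let u : ℕ → Subtype P := fun n => Nat.rec ⟨g 0, hg 0⟩
    (fun n un => ⟨k un (g (n + 1)) un.2 (hg (n + 1)), hk _ _ _ _⟩) n
  have hstep (n : ℕ) : f (u n).1 ≤ᵐ[μ] f (u (n + 1)).1 := hik _ _ _ _
  have hgu (n : ℕ) : f (g n) ≤ᵐ[μ] f (u n).1 := by
    cases n with
    | zero => exact EventuallyLE.refl _ _
    | succ n => exact hjk _ _ _ _
  refine ⟨fun n => (u n).1, fun n => (u n).2, ?_⟩
  filter_upwards [ae_all_iff.2 hstep, ae_all_iff.2 hgu, ae_all_iff.2 fun n => hv.1 _ (u n).2,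
    hlub] with ω hstepω hguω huv hlubω
  have hmono : Monotone fun n => f (u n).1 ω := monotone_nat_of_le_succ hstepω
  refine ⟨hmono, tendsto_atTop_isLUB hmono ⟨?_, fun b hb => hlubω.2 ?_⟩⟩
  · rintro _ ⟨n, rfl⟩
    exact huv n
  · rintro _ ⟨n, rfl⟩
    exact (hguω n).trans (hb ⟨n, rfl⟩)

end CountableSupremum

section CondExp

variable {m m0 : MeasurableSpace Ω} {μ : Measure Ω}

theorem condExp_ae_eq_restrict_of_ae_eq_restrict (hm : m ≤ m0) [SigmaFinite (μ.trim hm)]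
    {s : Set Ω} (hs : MeasurableSet[m] s) {f g : Ω → ℝ} (hf : Integrable f μ)
    (hg : Integrable g μ) (hfg : f =ᵐ[μ.restrict s] g) :
    μ[f | m] =ᵐ[μ.restrict s] μ[g | m] :=
  (condExp_restrict_ae_eq_restrict hm hs hf).symm.trans
    ((condExp_congr_ae hfg).trans (condExp_restrict_ae_eq_restrict hm hs hg))

theorem ae_tendsto_condExp_of_monotone (hm : m ≤ m0) [SigmaFinite (μ.trim hm)]
    {f : ℕ → Ω → ℝ} {g : Ω → ℝ} (hf : ∀ n, Integrable (f n) μ) (hg : Integrable g μ)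
    (hmono : ∀ᵐ ω ∂μ, Monotone fun n => f n ω)
    (hlim : ∀ᵐ ω ∂μ, Tendsto (fun n => f n ω) atTop (𝓝 (g ω))) :
    ∀ᵐ ω ∂μ, Tendsto (fun n => μ[f n | m] ω) atTop (𝓝 (μ[g | m] ω)) := by
  have hstep (n : ℕ) : f n ≤ᵐ[μ] f (n + 1) := by
    filter_upwards [hmono] with ω hω
    exact hω n.le_succ
  have hle (n : ℕ) : f n ≤ᵐ[μ] g := by
    filter_upwards [hmono, hlim] with ω hmonoω hlimω
    exact hmonoω.ge_of_tendsto hlimω n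
  refine tendsto_of_integral_tendsto_of_monotone (fun n => integrable_condExp) integrable_condExp
    ?_ ?_ (ae_all_iff.2 fun n => condExp_mono (hf n) hg (hle n))
  · simp_rw [integral_condExp hm]
    exact integral_tendsto_of_tendsto_of_monotone hf hg hmono hlim
  · filter_upwards [ae_all_iff.2 fun n => condExp_mono (hf n) (hf (n + 1)) (hstep n)] with ω hω
    exact monotone_nat_of_le_succ hω

end CondExp

section StoppingTime

variable {m0 : MeasurableSpace Ω} {μ : Measure Ω}

theorem MeasureTheory.IsStoppingTime.measurableSet_of_subset_eq {ι : Type*} [Preorder ι]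
    {𝓕 : Filtration ι m0} {σ τ : Ω → WithTop ι} (hσ : IsStoppingTime 𝓕 σ)
    (hτ : IsStoppingTime 𝓕 τ) {s : Set Ω} (hsub : s ⊆ {ω | σ ω = τ ω})
    (hs : MeasurableSet[hσ.measurableSpace] s) : MeasurableSet[hτ.measurableSpace] s := by
  refine ⟨hs.1, fun i => ?_⟩
  have : s ∩ {ω | τ ω ≤ i} = s ∩ {ω | σ ω ≤ i} := by
    ext ω
    constructor <;> rintro ⟨hω, hle⟩ <;> refine ⟨hω, ?_⟩
    · rwa [mem_ofPred_eq, hsub hω]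
    · rwa [mem_ofPred_eq, ← hsub hω]
  rw [this]
  exact hs.2 i

theorem MeasureTheory.IsStoppingTime.piecewise_of_measurableSet {ι : Type*} [Preorder ι]
    {𝓕 : Filtration ι m0} {p q : Ω → WithTop ι} (hp : IsStoppingTime 𝓕 p)
    (hq : IsStoppingTime 𝓕 q) {B : Set Ω} [DecidablePred (· ∈ B)]
    (hB : MeasurableSet[hp.measurableSpace] B) (hBc : MeasurableSet[hq.measurableSpace] Bᶜ) :
    IsStoppingTime 𝓕 (B.piecewise p q) := by
  intro i
  have : {ω | B.piecewise p q ω ≤ i} = B ∩ {ω | p ω ≤ i} ∪ Bᶜ ∩ {ω | q ω ≤ i} := by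
    ext ω
    by_cases hω : ω ∈ B <;> simp [hω]
  rw [this]
  exact (hB.2 i).union (hBc.2 i)

theorem MeasureTheory.IsStoppingTime.condExp_ae_eq_restrict_eq {ι : Type*} [LinearOrder ι]
    [TopologicalSpace ι] [OrderTopology ι] [SecondCountableTopology ι] [IsFiniteMeasure μ]
    {𝓕 : Filtration ι m0} {σ τ : Ω → WithTop ι} (hσ : IsStoppingTime 𝓕 σ)
    (hτ : IsStoppingTime 𝓕 τ) (f : Ω → ℝ) :
    μ[f | hσ.measurableSpace] =ᵐ[μ.restrict {ω | σ ω = τ ω}] μ[f | hτ.measurableSpace] :=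
  condExp_ae_eq_restrict_of_measurableSpace_eq_on hσ.measurableSpace_le hτ.measurableSpace_le
    (hσ.measurableSet_eq_stopping_time hτ) fun _ =>
      ⟨hσ.measurableSet_of_subset_eq hτ inter_subset_left,
        hτ.measurableSet_of_subset_eq hσ fun _ hω => (inter_subset_left hω).symm⟩

end StoppingTime

namespace MemT0

variable {m0 : MeasurableSpace Ω} {μ : Measure Ω} {𝓕 : Filtration ℝ m0} {T : ℝ}

theorem measurableSet_inter_le_of_null (hFnull : ∀ A : Set Ω, μ A = 0 → MeasurableSet[𝓕 0] A)
    {τ : Ω → ℝ} (hτ : MemT0 𝓕 T τ) {N : Set Ω} (hN : μ N = 0) (t : ℝ) :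
    MeasurableSet[𝓕 t] (N ∩ {ω | (τ ω : WithTop ℝ) ≤ t}) := by
  by_cases ht : 0 ≤ t
  · exact 𝓕.mono ht _ (hFnull _ (measure_mono_null inter_subset_left hN))
  · convert @MeasurableSet.empty _ (𝓕 t)
    refine eq_empty_of_forall_notMem fun ω hω => ht ?_
    exact (hτ.2 ω).1.trans (WithTop.coe_le_coe.1 hω.2)

theorem measurableSpace_mono_ae (hFnull : ∀ A : Set Ω, μ A = 0 → MeasurableSet[𝓕 0] A)
    {σ τ : Ω → ℝ} (hσ : MemT0 𝓕 T σ) (hτ : MemT0 𝓕 T τ) (h : σ ≤ᵐ[μ] τ) :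
    hσ.1.measurableSpace ≤ hτ.1.measurableSpace := by
  intro s hs
  refine ⟨hs.1, fun t => ?_⟩
  -- Off the null set `{τ < σ}`, the event `{τ ≤ t}` is contained in `{σ ≤ t}`.
  have hsplit : s ∩ {ω | (τ ω : WithTop ℝ) ≤ t} =
      s ∩ {ω | (σ ω : WithTop ℝ) ≤ t} ∩ {ω | (τ ω : WithTop ℝ) ≤ t} ∪
        (s ∩ {ω | ¬σ ω ≤ τ ω}) ∩ {ω | (τ ω : WithTop ℝ) ≤ t} := by
    ext ω
    simp only [mem_union, mem_inter_iff, mem_ofPred_eq, WithTop.coe_le_coe]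
    by_cases hστ : σ ω ≤ τ ω
    · exact ⟨fun h => Or.inl ⟨⟨h.1, hστ.trans h.2⟩, h.2⟩, by tauto⟩
    · tauto
  rw [hsplit]
  exact ((hs.2 t).inter (hτ.1 t)).union
    (hτ.measurableSet_inter_le_of_null hFnull (measure_mono_null inter_subset_right (ae_iff.1 h)) t)

theorem piecewise (hFnull : ∀ A : Set Ω, μ A = 0 → MeasurableSet[𝓕 0] A)
    {σ σ' p q : Ω → ℝ} (hσ : MemT0 𝓕 T σ) (hσ' : MemT0 𝓕 T σ') (hp : MemT0 𝓕 T p)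
    (hq : MemT0 𝓕 T q) {B : Set Ω} [DecidablePred (· ∈ B)]
    (hB : MeasurableSet[hσ.1.measurableSpace] B) (hBc : MeasurableSet[hσ'.1.measurableSpace] Bᶜ)
    (hσp : σ ≤ᵐ[μ] p) (hσ'q : σ' ≤ᵐ[μ] q) : MemT0 𝓕 T (B.piecewise p q) := by
  refine ⟨?_, fun ω => ?_⟩
  · convert hp.1.piecewise_of_measurableSet hq.1
      (measurableSpace_mono_ae hFnull hσ hp hσp _ hB)
      (measurableSpace_mono_ae hFnull hσ' hq hσ'q _ hBc) using 1
    ext ω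
    by_cases hω : ω ∈ B <;> simp [hω]
  · by_cases hω : ω ∈ B <;> simp [hω, hp.2 ω, hq.2 ω]

theorem measurableSet_eq {τ τ' : Ω → ℝ} (hτ : MemT0 𝓕 T τ) (hτ' : MemT0 𝓕 T τ') :
    MeasurableSet[hτ.1.measurableSpace] {ω | τ ω = τ' ω} := by
  simpa using hτ.1.measurableSet_eq_stopping_time hτ'.1

end MemT0

/-- The index set `T_S × T_S` of the double optimal stopping problem. -/
def IsPairAfter {m0 : MeasurableSpace Ω} (𝓕 : Filtration ℝ m0) (T : ℝ) (μ : Measure Ω)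
    (S : Ω → ℝ) (p : (Ω → ℝ) × (Ω → ℝ)) : Prop :=
  MemT0 𝓕 T p.1 ∧ MemT0 𝓕 T p.2 ∧ S ≤ᵐ[μ] p.1 ∧ S ≤ᵐ[μ] p.2

theorem isPairAfter_self {m0 : MeasurableSpace Ω} {𝓕 : Filtration ℝ m0} {T : ℝ} {μ : Measure Ω}
    {τ : Ω → ℝ} (hτ : MemT0 𝓕 T τ) : IsPairAfter 𝓕 T μ τ (τ, τ) :=
  ⟨hτ, hτ, EventuallyLE.rfl, EventuallyLE.rfl⟩

theorem IsPairAfter.mono {m0 : MeasurableSpace Ω} {𝓕 : Filtration ℝ m0} {T : ℝ} {μ : Measure Ω}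
    {σ τ : Ω → ℝ} {p : (Ω → ℝ) × (Ω → ℝ)} (hp : IsPairAfter 𝓕 T μ τ p) (hστ : σ ≤ᵐ[μ] τ) :
    IsPairAfter 𝓕 T μ σ p :=
  ⟨hp.1, hp.2.1, hστ.trans hp.2.2.1, hστ.trans hp.2.2.2⟩

namespace Biadmissible

variable {m0 : MeasurableSpace Ω} {μ : Measure Ω} {𝓕 : Filtration ℝ m0}
  {T : ℝ} {ψ : (Ω → ℝ) → (Ω → ℝ) → Ω → ℝ}

theorem condExp_nonneg (hψ : Biadmissible 𝓕 T μ ψ) {τ₁ τ₂ : Ω → ℝ} (hτ₁ : MemT0 𝓕 T τ₁)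
    (hτ₂ : MemT0 𝓕 T τ₂) (m : MeasurableSpace Ω) : 0 ≤ᵐ[μ] μ[ψ τ₁ τ₂ | m] :=
  MeasureTheory.condExp_nonneg (Eventually.of_forall (hψ.1 τ₁ τ₂ hτ₁ hτ₂).2)

theorem essSup_nonneg (hψ : Biadmissible 𝓕 T μ ψ) {τ : Ω → ℝ} (hτ : MemT0 𝓕 T τ) {v : Ω → ℝ}
    (hv : IsEssSupFam μ (IsPairAfter 𝓕 T μ τ)
      (fun p => μ[ψ p.1 p.2 | hτ.1.measurableSpace]) v) : 0 ≤ᵐ[μ] v :=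
  (hψ.condExp_nonneg hτ hτ _).trans (hv.1 _ (isPairAfter_self hτ))

variable [IsFiniteMeasure μ]

theorem condExp_ae_eq_restrict (hψ : Biadmissible 𝓕 T μ ψ)
    (hψint : ∀ τ₁ τ₂, MemT0 𝓕 T τ₁ → MemT0 𝓕 T τ₂ → Integrable (ψ τ₁ τ₂) μ)
    {σ₁ σ₂ τ₁ τ₂ : Ω → ℝ} (hσ₁ : MemT0 𝓕 T σ₁) (hσ₂ : MemT0 𝓕 T σ₂) (hτ₁ : MemT0 𝓕 T τ₁)
    (hτ₂ : MemT0 𝓕 T τ₂) {m : MeasurableSpace Ω} (hm : m ≤ m0) {B : Set Ω}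
    (hB : MeasurableSet[m] B) (h₁ : EqOn σ₁ τ₁ B) (h₂ : EqOn σ₂ τ₂ B) :
    μ[ψ σ₁ σ₂ | m] =ᵐ[μ.restrict B] μ[ψ τ₁ τ₂ | m] := by
  refine condExp_ae_eq_restrict_of_ae_eq_restrict hm hB (hψint _ _ hσ₁ hσ₂) (hψint _ _ hτ₁ hτ₂) ?_
  rw [EventuallyEq, ae_restrict_iff' (hm _ hB)]
  filter_upwards [hψ.2 σ₁ τ₁ σ₂ τ₂ hσ₁ hτ₁ hσ₂ hτ₂] with ω hω hωB
  exact hω (h₁ hωB) (h₂ hωB)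

/-- The pair `r` follows `p` on the `F_τ`-event where `p` has the larger conditional reward and
`q` elsewhere. -/
theorem exists_isPairAfter_condExp_ge (hFnull : ∀ A : Set Ω, μ A = 0 → MeasurableSet[𝓕 0] A)
    (hψ : Biadmissible 𝓕 T μ ψ)
    (hψint : ∀ τ₁ τ₂, MemT0 𝓕 T τ₁ → MemT0 𝓕 T τ₂ → Integrable (ψ τ₁ τ₂) μ)
    {τ : Ω → ℝ} (hτ : MemT0 𝓕 T τ) {p q : (Ω → ℝ) × (Ω → ℝ)} (hp : IsPairAfter 𝓕 T μ τ p)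
    (hq : IsPairAfter 𝓕 T μ τ q) :
    ∃ r, IsPairAfter 𝓕 T μ τ r ∧
      μ[ψ p.1 p.2 | hτ.1.measurableSpace] ≤ᵐ[μ] μ[ψ r.1 r.2 | hτ.1.measurableSpace] ∧
      μ[ψ q.1 q.2 | hτ.1.measurableSpace] ≤ᵐ[μ] μ[ψ r.1 r.2 | hτ.1.measurableSpace] := by
  classical
  set m := hτ.1.measurableSpace
  have hm : m ≤ m0 := hτ.1.measurableSpace_le
  set B : Set Ω := {ω | μ[ψ q.1 q.2 | m] ω ≤ μ[ψ p.1 p.2 | m] ω}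
  have hB : MeasurableSet[m] B :=
    measurableSet_le stronglyMeasurable_condExp.measurable stronglyMeasurable_condExp.measurable
  set r : (Ω → ℝ) × (Ω → ℝ) := (B.piecewise p.1 q.1, B.piecewise p.2 q.2)
  have hr₁ : MemT0 𝓕 T r.1 := hτ.piecewise hFnull hτ hp.1 hq.1 hB hB.compl hp.2.2.1 hq.2.2.1
  have hr₂ : MemT0 𝓕 T r.2 := hτ.piecewise hFnull hτ hp.2.1 hq.2.1 hB hB.compl hp.2.2.2 hq.2.2.2
  have hτr (σ σ' : Ω → ℝ) (hσ : τ ≤ᵐ[μ] σ) (hσ' : τ ≤ᵐ[μ] σ') : τ ≤ᵐ[μ] B.piecewise σ σ' := by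
    filter_upwards [hσ, hσ'] with ω h h'
    by_cases hω : ω ∈ B <;> simp [hω, h, h']
  have hrB : μ[ψ r.1 r.2 | m] =ᵐ[μ.restrict B] μ[ψ p.1 p.2 | m] :=
    hψ.condExp_ae_eq_restrict hψint hr₁ hr₂ hp.1 hp.2.1 hm hB (piecewise_eqOn _ _ _)
      (piecewise_eqOn _ _ _)
  have hrBc : μ[ψ r.1 r.2 | m] =ᵐ[μ.restrict Bᶜ] μ[ψ q.1 q.2 | m] :=
    hψ.condExp_ae_eq_restrict hψint hr₁ hr₂ hq.1 hq.2.1 hm hB.compl (piecewise_eqOn_compl _ _ _)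
      (piecewise_eqOn_compl _ _ _)
  have hmax : μ[ψ r.1 r.2 | m] =ᵐ[μ] fun ω => max (μ[ψ p.1 p.2 | m] ω) (μ[ψ q.1 q.2 | m] ω) := by
    refine ae_of_ae_restrict_of_ae_restrict_compl B ?_ ?_
    · filter_upwards [hrB, ae_restrict_mem (hm _ hB)] with ω hω hωB
      rw [hω, max_eq_left hωB]
    · filter_upwards [hrBc, ae_restrict_mem (hm _ hB).compl] with ω hω hωB
      have hlt : μ[ψ p.1 p.2 | m] ω < μ[ψ q.1 q.2 | m] ω := not_le.1 hωB
      rw [hω, max_eq_right hlt.le]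
  refine ⟨r, ⟨hr₁, hr₂, hτr _ _ hp.2.2.1 hq.2.2.1, hτr _ _ hp.2.2.2 hq.2.2.2⟩, ?_, ?_⟩
  · filter_upwards [hmax] with ω hω
    exact hω ▸ le_max_left _ _
  · filter_upwards [hmax] with ω hω
    exact hω ▸ le_max_right _ _

/-- On `{τ = τ'}`, a pair after `τ` can be replaced by a pair after `τ'` (switching to `(τ', τ')`
off that event) without changing the conditional reward there. -/
theorem condExp_ae_le_on_eq (hFnull : ∀ A : Set Ω, μ A = 0 → MeasurableSet[𝓕 0] A)
    (hψ : Biadmissible 𝓕 T μ ψ)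
    (hψint : ∀ τ₁ τ₂, MemT0 𝓕 T τ₁ → MemT0 𝓕 T τ₂ → Integrable (ψ τ₁ τ₂) μ)
    {τ τ' : Ω → ℝ} (hτ : MemT0 𝓕 T τ) (hτ' : MemT0 𝓕 T τ') {v' : Ω → ℝ}
    (hv' : IsEssSupFam μ (IsPairAfter 𝓕 T μ τ')
      (fun p => μ[ψ p.1 p.2 | hτ'.1.measurableSpace]) v')
    {p : (Ω → ℝ) × (Ω → ℝ)} (hp : IsPairAfter 𝓕 T μ τ p) :
    ∀ᵐ ω ∂μ.restrict {ω | τ ω = τ' ω}, μ[ψ p.1 p.2 | hτ.1.measurableSpace] ω ≤ v' ω := by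
  classical
  set A := {ω | τ ω = τ' ω}
  have hAτ : MeasurableSet[hτ.1.measurableSpace] A := hτ.measurableSet_eq hτ'
  have hAτ' : MeasurableSet[hτ'.1.measurableSpace] A := by
    simpa only [eq_comm] using hτ'.measurableSet_eq hτ
  set p' : (Ω → ℝ) × (Ω → ℝ) := (A.piecewise p.1 τ', A.piecewise p.2 τ')
  have hp'₁ : MemT0 𝓕 T p'.1 :=
    hτ.piecewise hFnull hτ' hp.1 hτ' hAτ hAτ'.compl hp.2.2.1 EventuallyLE.rfl
  have hp'₂ : MemT0 𝓕 T p'.2 :=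
    hτ.piecewise hFnull hτ' hp.2.1 hτ' hAτ hAτ'.compl hp.2.2.2 EventuallyLE.rfl
  have hτ'p' (σ : Ω → ℝ) (hσ : τ ≤ᵐ[μ] σ) : τ' ≤ᵐ[μ] A.piecewise σ τ' := by
    filter_upwards [hσ] with ω h
    by_cases hω : ω ∈ A
    · simpa [hω, show τ ω = τ' ω from hω] using h
    · simp [hω]
  have hp' : IsPairAfter 𝓕 T μ τ' p' := ⟨hp'₁, hp'₂, hτ'p' _ hp.2.2.1, hτ'p' _ hp.2.2.2⟩
  have hstop : μ[ψ p.1 p.2 | hτ.1.measurableSpace]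
      =ᵐ[μ.restrict A] μ[ψ p.1 p.2 | hτ'.1.measurableSpace] := by
    simpa using hτ.1.condExp_ae_eq_restrict_eq (μ := μ) hτ'.1 (ψ p.1 p.2)
  have hpair : μ[ψ p.1 p.2 | hτ'.1.measurableSpace]
      =ᵐ[μ.restrict A] μ[ψ p'.1 p'.2 | hτ'.1.measurableSpace] :=
    (hψ.condExp_ae_eq_restrict hψint hp'₁ hp'₂ hp.1 hp.2.1 hτ'.1.measurableSpace_le hAτ'
      (piecewise_eqOn _ _ _) (piecewise_eqOn _ _ _)).symm
  filter_upwards [hstop, hpair, ae_restrict_of_ae (hv'.1 p' hp')] with ω h₁ h₂ hle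
  rw [h₁, h₂]
  exact hle

theorem essSup_le_on_eq (hFnull : ∀ A : Set Ω, μ A = 0 → MeasurableSet[𝓕 0] A)
    (hψ : Biadmissible 𝓕 T μ ψ)
    (hψint : ∀ τ₁ τ₂, MemT0 𝓕 T τ₁ → MemT0 𝓕 T τ₂ → Integrable (ψ τ₁ τ₂) μ)
    {τ τ' : Ω → ℝ} (hτ : MemT0 𝓕 T τ) (hτ' : MemT0 𝓕 T τ') {v v' : Ω → ℝ}
    (hv : IsEssSupFam μ (IsPairAfter 𝓕 T μ τ) (fun p => μ[ψ p.1 p.2 | hτ.1.measurableSpace]) v)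
    (hv' : IsEssSupFam μ (IsPairAfter 𝓕 T μ τ')
      (fun p => μ[ψ p.1 p.2 | hτ'.1.measurableSpace]) v') :
    ∀ᵐ ω ∂μ, τ ω = τ' ω → v ω ≤ v' ω := by
  classical
  set A := {ω | τ ω = τ' ω}
  have hA : MeasurableSet A := hτ.1.measurableSpace_le _ (hτ.measurableSet_eq hτ')
  have hvw : v ≤ᵐ[μ] A.piecewise v' v := hv.2 _ fun p hp => by
    refine ae_of_ae_restrict_of_ae_restrict_compl A ?_ ?_
    · filter_upwards [hψ.condExp_ae_le_on_eq hFnull hψint hτ hτ' hv' hp, ae_restrict_mem hA]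
        with ω h hω
      rwa [piecewise_eq_of_mem _ _ _ hω]
    · filter_upwards [ae_restrict_of_ae (hv.1 p hp), ae_restrict_mem hA.compl] with ω h hω
      rwa [piecewise_eq_of_notMem _ _ _ hω]
  filter_upwards [hvw] with ω h hω
  rwa [piecewise_eq_of_mem _ _ _ (show ω ∈ A from hω)] at h

theorem condExp_essSup_le (hFnull : ∀ A : Set Ω, μ A = 0 → MeasurableSet[𝓕 0] A)
    (hψ : Biadmissible 𝓕 T μ ψ)
    (hψint : ∀ τ₁ τ₂, MemT0 𝓕 T τ₁ → MemT0 𝓕 T τ₂ → Integrable (ψ τ₁ τ₂) μ)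
    {θ θ' : Ω → ℝ} (hθ : MemT0 𝓕 T θ) (hθ' : MemT0 𝓕 T θ') (hle : θ' ≤ᵐ[μ] θ) {v v' : Ω → ℝ}
    (hv : IsEssSupFam μ (IsPairAfter 𝓕 T μ θ) (fun p => μ[ψ p.1 p.2 | hθ.1.measurableSpace]) v)
    (hv' : IsEssSupFam μ (IsPairAfter 𝓕 T μ θ')
      (fun p => μ[ψ p.1 p.2 | hθ'.1.measurableSpace]) v') :
    μ[v | hθ'.1.measurableSpace] ≤ᵐ[μ] v' := by
  by_cases hint : Integrable v μ
  swap
  · rw [condExp_of_not_integrable hint]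
    exact hψ.essSup_nonneg hθ' hv'
  obtain ⟨Q, hQ, hQlim⟩ := hv.exists_monotone_seq_tendsto ⟨_, isPairAfter_self hθ⟩
    (fun _ _ => integrable_condExp.aemeasurable)
    fun _ _ hp hq => hψ.exists_isPairAfter_condExp_ge hFnull hψint hθ hp hq
  have hmθ : hθ'.1.measurableSpace ≤ hθ.1.measurableSpace :=
    hθ'.measurableSpace_mono_ae hFnull hθ hle
  have htend := ae_tendsto_condExp_of_monotone hθ'.1.measurableSpace_le
    (fun n => integrable_condExp) hint (hQlim.mono fun _ h => h.1) (hQlim.mono fun _ h => h.2)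
  have hbound (n : ℕ) : μ[μ[ψ (Q n).1 (Q n).2 | hθ.1.measurableSpace] | hθ'.1.measurableSpace]
      ≤ᵐ[μ] v' :=
    (condExp_condExp_of_le hmθ hθ.1.measurableSpace_le).trans_le (hv'.1 _ ((hQ n).mono hle))
  filter_upwards [htend, ae_all_iff.2 hbound] with ω hω hboundω
  exact le_of_tendsto' hω hboundω

end Biadmissible

theorem double_value_family_admissible_supermartingale_general
    {m0 : MeasurableSpace Ω} (μ : Measure Ω) [IsProbabilityMeasure μ]
    (𝓕 : Filtration ℝ m0) (T : ℝ)
    (hFnull : ∀ A : Set Ω, μ A = 0 → MeasurableSet[𝓕 0] A)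
    (ψ : (Ω → ℝ) → (Ω → ℝ) → Ω → ℝ)
    (hψ : Biadmissible 𝓕 T μ ψ)
    (hψint : ∀ τ₁ τ₂, MemT0 𝓕 T τ₁ → MemT0 𝓕 T τ₂ → Integrable (ψ τ₁ τ₂) μ)
    (V : (Ω → ℝ) → Ω → ℝ)
    (hV : ∀ S (hS : MemT0 𝓕 T S),
      IsEssSupFam μ
        (fun p : (Ω → ℝ) × (Ω → ℝ) =>
          MemT0 𝓕 T p.1 ∧ MemT0 𝓕 T p.2 ∧ S ≤ᵐ[μ] p.1 ∧ S ≤ᵐ[μ] p.2)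
        (fun p => μ[ψ p.1 p.2 | hS.1.measurableSpace]) (V S)) :
    AdmissibleAE 𝓕 T μ V ∧
    ∀ S, MemT0 𝓕 T S →
      ∀ θ θ' (_hθ : MemT0 𝓕 T θ) (hθ' : MemT0 𝓕 T θ'),
        S ≤ᵐ[μ] θ → S ≤ᵐ[μ] θ' → θ' ≤ᵐ[μ] θ →
        μ[V θ | hθ'.1.measurableSpace] ≤ᵐ[μ] V θ' := by
  refine ⟨⟨fun τ hτ => ⟨hψ.essSup_nonneg hτ (hV τ hτ), ?measurable⟩, fun τ τ' hτ hτ' => ?agree⟩,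
    ?supermartingale⟩
  case measurable =>
    exact (hV τ hτ).exists_measurable_ae_eq hτ.1.measurableSpace_le ⟨_, isPairAfter_self hτ⟩
      fun _ _ => stronglyMeasurable_condExp.measurable
  case agree =>
    filter_upwards [hψ.essSup_le_on_eq hFnull hψint hτ hτ' (hV τ hτ) (hV τ' hτ'),
      hψ.essSup_le_on_eq hFnull hψint hτ' hτ (hV τ' hτ') (hV τ hτ)] with ω hle hge heq
    exact le_antisymm (hle heq) (hge heq.symm)
  case supermartingale =>
    intro S _ θ θ' hθ hθ' _ _ hle
    exact hψ.condExp_essSup_le hFnull hψint hθ hθ' hle (hV θ hθ) (hV θ' hθ')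

/-- For a biadmissible family `ψ`, the double-stopping value
family `v(S) = ess sup_{τ₁,τ₂ ∈ T_S} E[ψ(τ₁,τ₂) | F_S]` is admissible and is a
supermartingale system. -/
theorem double_value_family_admissible_supermartingale
    {m0 : MeasurableSpace Ω} (μ : Measure Ω) [IsProbabilityMeasure μ]
    (𝓕 : Filtration ℝ m0) (T : ℝ) (hT : 0 ≤ T)
    (hFright : ∀ t : ℝ, 𝓕 t = ⨅ s ∈ Set.Ioi t, 𝓕 s)
    (hFnull : ∀ A : Set Ω, μ A = 0 → MeasurableSet[𝓕 0] A)
    (ψ : (Ω → ℝ) → (Ω → ℝ) → Ω → ℝ)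
    (hψ : Biadmissible 𝓕 T μ ψ)
    (hψint : ∀ τ₁ τ₂, MemT0 𝓕 T τ₁ → MemT0 𝓕 T τ₂ → Integrable (ψ τ₁ τ₂) μ)
    (V : (Ω → ℝ) → Ω → ℝ)
    (hV : ∀ S (hS : MemT0 𝓕 T S),
      IsEssSupFam μ
        (fun p : (Ω → ℝ) × (Ω → ℝ) =>
          MemT0 𝓕 T p.1 ∧ MemT0 𝓕 T p.2 ∧ S ≤ᵐ[μ] p.1 ∧ S ≤ᵐ[μ] p.2)
        (fun p => μ[ψ p.1 p.2 | hS.1.measurableSpace]) (V S)) :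
    AdmissibleAE 𝓕 T μ V ∧
    ∀ S, MemT0 𝓕 T S →
      ∀ θ θ' (_hθ : MemT0 𝓕 T θ) (hθ' : MemT0 𝓕 T θ'),
        S ≤ᵐ[μ] θ → S ≤ᵐ[μ] θ' → θ' ≤ᵐ[μ] θ →
        μ[V θ | hθ'.1.measurableSpace] ≤ᵐ[μ] V θ' :=
  double_value_family_admissible_supermartingale_general μ 𝓕 T hFnull ψ hψ hψint V hV
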